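/- arXiv:1911.04355 — 2 statements merged into one kernel-verified Lean document; each statement's English description precedes it below -/
import Mathlib

section
/- Fix n ≥ 1 and vectors β_p ∈ ℝⁿ (p ≥ 2) with nonnegative entries, β_p = 0 for odd p, Σ_{p≥2} 2^p β_p(j)² < ∞ for every j ≤ n, and assume that for each j ≤ n there exists some p ≥ 2 with β_p(j) ≠ 0. Let Q_{ℓ−1} and Q_ℓ be n×n real symmetric positive semidefinite matrices with entries in [−1,1] such that Q_{ℓ−1} ⪯ Q_ℓ in the Loewner order, det Q_ℓ > 0, and det(Q_ℓ − Q_{ℓ−1}) > 0. Then det(ξ'(Q_ℓ) − ξ'(Q_{ℓ−1})) > 0. -/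
/-!
Termwise, `ξ'(A) - ξ'(B) = Σ_p p · D_p (A^{∘(p-1)} - B^{∘(p-1)}) D_p` with `D_p = diag β_p`.
By the Schur product theorem, `B ⪯ A` with `A - B ≻ 0` and `B ⪰ 0` gives
`A^{∘k} - B^{∘k} ≻ 0` for every `k ≥ 1`, so every term is positive semidefinite. For `v ≠ 0`
with `v_i ≠ 0`, a `p` with `β_p(i) ≠ 0` makes `D_p v ≠ 0`, so the `p`-th term is strictly
positive on `v`, and hence so is the (summable) series.
-/

open Matrix BigOperators Filter MeasureTheory

noncomputable section

namespace SphericalSG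

abbrev Mat (n : ℕ) := Matrix (Fin n) (Fin n) ℝ

variable {n : ℕ}

/-- Frobenius inner product `⟨A,B⟩ = tr(AB)`. -/
def ip (A B : Mat n) : ℝ := (A * B).trace

/-- Sum of all entries of a matrix. -/
def matSum (A : Mat n) : ℝ := ∑ i, ∑ j, A i j

/-- `ξ(A) = Σ_{p≥2} (β_p β_pᵀ) ⊙ A^{∘p}` (entrywise). -/
def xiM (β : ℕ → Fin n → ℝ) (A : Mat n) : Mat n :=
  Matrix.of fun i j => ∑' p : ℕ, β (p + 2) i * β (p + 2) j * A i j ^ (p + 2)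

/-- `ξ'(A) = Σ_{p≥2} p (β_p β_pᵀ) ⊙ A^{∘(p-1)}`. -/
def xi'M (β : ℕ → Fin n → ℝ) (A : Mat n) : Mat n :=
  Matrix.of fun i j => ∑' p : ℕ, ((p : ℝ) + 2) * (β (p + 2) i * β (p + 2) j * A i j ^ (p + 1))

/-- `ξ''(A) = Σ_{p≥2} p(p-1) (β_p β_pᵀ) ⊙ A^{∘(p-2)}`. -/
def xi''M (β : ℕ → Fin n → ℝ) (A : Mat n) : Mat n :=
  Matrix.of fun i j =>
    ∑' p : ℕ, ((p : ℝ) + 2) * ((p : ℝ) + 1) * (β (p + 2) i * β (p + 2) j * A i j ^ p)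

/-- `θ(A) = Σ_{p≥2} (p-1) (β_p β_pᵀ) ⊙ A^{∘p}`. -/
def thetaM (β : ℕ → Fin n → ℝ) (A : Mat n) : Mat n :=
  Matrix.of fun i j => ∑' p : ℕ, ((p : ℝ) + 1) * (β (p + 2) i * β (p + 2) j * A i j ^ (p + 2))

/-- `Λ_p = Λ - Σ_{k=p}^{r-1} x_k (ξ'(Q_{k+1}) - ξ'(Q_k))`, with `Λ_r = Λ`. -/
def Lam (β : ℕ → Fin n → ℝ) (x : ℕ → ℝ) (Qs : ℕ → Mat n) (Λ : Mat n) (r p : ℕ) : Mat n :=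
  Λ - ∑ k ∈ Finset.Ico p r, x k • (xi'M β (Qs (k + 1)) - xi'M β (Qs k))

/-- `D_p = Σ_{k=p}^{r-1} x_k (Q_{k+1} - Q_k)`. -/
def Dmat (x : ℕ → ℝ) (Qs : ℕ → Mat n) (r p : ℕ) : Mat n :=
  ∑ k ∈ Finset.Ico p r, x k • (Qs (k + 1) - Qs k)

/-- The discrete Parisi functional `𝒫_r(Λ, x̲, Q̲)`. -/
def Pfun (β : ℕ → Fin n → ℝ) (h : Fin n → ℝ) (Q : Mat n) (r : ℕ)
    (Λ : Mat n) (x : ℕ → ℝ) (Qs : ℕ → Mat n) : ℝ :=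
  (1 / 2) * (ip (vecMulVec h h) (Lam β x Qs Λ r 1)⁻¹ + ip Λ Q - (n : ℝ)
    - Real.log Λ.det
    + ∑ k ∈ Finset.Ico 1 r,
        (1 / x k) * Real.log ((Lam β x Qs Λ r (k + 1)).det / (Lam β x Qs Λ r k).det)
    + ip (xi'M β (Qs 1)) (Lam β x Qs Λ r 1)⁻¹
    - ∑ k ∈ Finset.Ico 1 r, x k * matSum (thetaM β (Qs (k + 1)) - thetaM β (Qs k)))

/-- The discrete Crisanti–Sommers functional `𝒞_r(x̲, Q̲)`. -/
def Cfun (β : ℕ → Fin n → ℝ) (h : Fin n → ℝ) (Q : Mat n) (r : ℕ)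
    (x : ℕ → ℝ) (Qs : ℕ → Mat n) : ℝ :=
  (1 / 2) * (ip (vecMulVec h h) (Dmat x Qs r 1)
    + (1 / x (r - 1)) * Real.log (Q - Qs (r - 1)).det
    - ∑ k ∈ Finset.Ico 1 (r - 1),
        (1 / x k) * Real.log ((Dmat x Qs r (k + 1)).det / (Dmat x Qs r k).det)
    + ip (Qs 1) (Dmat x Qs r 1)⁻¹
    + ∑ k ∈ Finset.Ico 1 r, x k * matSum (xiM β (Qs (k + 1)) - xiM β (Qs k)))

/-- A discrete path `(x̲, Q̲)` of order `r`:
`0 = x_0 ≤ x_1 ≤ ⋯ ≤ x_{r-1} ≤ 1` and `0 = Q_0 ⪯ Q_1 ⪯ ⋯ ⪯ Q_r = Q`. -/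
structure IsPath (Q : Mat n) (r : ℕ) (x : ℕ → ℝ) (Qs : ℕ → Mat n) : Prop where
  x0 : x 0 = 0
  xmono : ∀ k, k + 1 ≤ r - 1 → x k ≤ x (k + 1)
  xtop : x (r - 1) ≤ 1
  Q0 : Qs 0 = 0
  Qr : Qs r = Q
  inc : ∀ k < r, (Qs (k + 1) - Qs k).PosSemidef

/-- A tuple `(Q_1, …, Q_{r-1})` with positive definite increments,
`Q_0 = 0` and `Q_r = Q`. -/
structure IsStrictTuple (Q : Mat n) (r : ℕ) (Qs : ℕ → Mat n) : Prop where
  Q0 : Qs 0 = 0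
  Qr : Qs r = Q
  inc : ∀ k < r, (Qs (k + 1) - Qs k).PosDef

/-- A strictly increasing sequence `0 = x_0 < x_1 < ⋯ < x_{r-1} = 1`. -/
structure IsStrictSeq (r : ℕ) (x : ℕ → ℝ) : Prop where
  x0 : x 0 = 0
  xmono : ∀ k, k + 1 ≤ r - 1 → x k < x (k + 1)
  xtop : x (r - 1) = 1

/-- `Ē_p = Σ_{k=p}^{r-1} x_k (E_{k+1} - E_k)`. -/
def Ebar (x : ℕ → ℝ) (E : ℕ → Mat n) (r p : ℕ) : Mat n :=
  ∑ k ∈ Finset.Ico p r, x k • (E (k + 1) - E k)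

/-- The error matrices for the Parisi critical point, with entrywise division by `ξ''`:
`E_p = (1/(x_p - x_{p-1})) ((Q_{p+1}-Q_p)⁻¹ - (Q_p-Q_{p-1})⁻¹) ⊘ ξ''(Q_p)`
for `1 ≤ p ≤ r-1`, and `E_p = 0` otherwise (in particular `E_r = 0`). -/
def EP (β : ℕ → Fin n → ℝ) (x : ℕ → ℝ) (Qs : ℕ → Mat n) (r p : ℕ) : Mat n :=
  if 1 ≤ p ∧ p ≤ r - 1 then
    Matrix.of fun i j =>
      (1 / (x p - x (p - 1))) *
        ((((Qs (p + 1) - Qs p)⁻¹ - (Qs p - Qs (p - 1))⁻¹) i j) / xi''M β (Qs p) i j)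
  else 0

/-- The error matrices for the Crisanti–Sommers critical point:
`E_p = (1/(x_p - x_{p-1})) ((Q_{p+1}-Q_p)⁻¹ - (Q_p-Q_{p-1})⁻¹)` for `1 ≤ p ≤ r-1`,
and `E_p = 0` otherwise (in particular `E_r = 0`). -/
def EC (x : ℕ → ℝ) (Qs : ℕ → Mat n) (r p : ℕ) : Mat n :=
  if 1 ≤ p ∧ p ≤ r - 1 then
    (1 / (x p - x (p - 1))) • ((Qs (p + 1) - Qs p)⁻¹ - (Qs p - Qs (p - 1))⁻¹)
  else 0

/-- The logarithmic barrier `Σ_{k=0}^{r-1} log det (Q_{k+1} - Q_k)`. -/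
def barrier (Qs : ℕ → Mat n) (r : ℕ) : ℝ :=
  ∑ k ∈ Finset.range r, Real.log ((Qs (k + 1) - Qs k).det)

/-- The barrier-perturbed Parisi functional `𝒫_r^ε`. -/
def PfunEps (β : ℕ → Fin n → ℝ) (h : Fin n → ℝ) (Q : Mat n) (r : ℕ) (ε : ℝ)
    (Λ : Mat n) (x : ℕ → ℝ) (Qs : ℕ → Mat n) : ℝ :=
  Pfun β h Q r Λ x Qs - (ε / 2) * barrier Qs r

/-- The barrier-perturbed Crisanti–Sommers functional `𝒞_r^ε`. -/
def CfunEps (β : ℕ → Fin n → ℝ) (h : Fin n → ℝ) (Q : Mat n) (r : ℕ) (ε : ℝ)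
    (x : ℕ → ℝ) (Qs : ℕ → Mat n) : ℝ :=
  Cfun β h Q r x Qs - (ε / 2) * barrier Qs r

/-- `D_p(ε) = D_p + ε Ē_p` (with the `EP` errors). -/
def DE (β : ℕ → Fin n → ℝ) (x : ℕ → ℝ) (Qs : ℕ → Mat n) (r : ℕ) (ε : ℝ) (p : ℕ) : Mat n :=
  Dmat x Qs r p + ε • Ebar x (EP β x Qs r) r p

/-- `Λ_p(ε) = Λ_p + ε Ē_p` (with the `EC` errors). -/
def LE (β : ℕ → Fin n → ℝ) (x : ℕ → ℝ) (Qs : ℕ → Mat n) (Λ : Mat n) (r : ℕ) (ε : ℝ)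
    (p : ℕ) : Mat n :=
  Lam β x Qs Λ r p + ε • Ebar x (EC x Qs r) r p

/-- The approximate Crisanti–Sommers functional `𝒞_r^ε(Q̲)` obtained from the
perturbed Parisi functional at its critical point. -/
def CfunEpsApprox (β : ℕ → Fin n → ℝ) (h : Fin n → ℝ) (r : ℕ) (ε : ℝ)
    (x : ℕ → ℝ) (Qs : ℕ → Mat n) : ℝ :=
  (1 / 2) * (ip (vecMulVec h h) (DE β x Qs r ε 1)
    + (1 / x (r - 1)) * Real.log (DE β x Qs r ε (r - 1)).det
    - ∑ k ∈ Finset.Ico 1 (r - 1),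
        (1 / x k) * Real.log ((DE β x Qs r ε (k + 1)).det / (DE β x Qs r ε k).det)
    + ip (Qs 1) (DE β x Qs r ε 1)⁻¹
    + ∑ k ∈ Finset.Ico 1 r, x k * matSum (xiM β (Qs (k + 1)) - xiM β (Qs k))
    - ε * ∑ k ∈ Finset.Ico 1 (r - 1),
        ip (Ebar x (EP β x Qs r) r (k + 1) - Ebar x (EP β x Qs r) r k) (xi'M β (Qs (k + 1)))
    - ∑ k ∈ Finset.Ico 1 (r - 1),
        (ε / x k) * ip (DE β x Qs r ε (k + 1))⁻¹
          (Ebar x (EP β x Qs r) r k - Ebar x (EP β x Qs r) r (k + 1))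
    - ε * ip (DE β x Qs r ε (r - 1))⁻¹ (Ebar x (EP β x Qs r) r (r - 1))
    + ε * ip (xi'M β (Qs (r - 1))) (Ebar x (EP β x Qs r) r (r - 1))
    - ε * barrier Qs r)

/-- The approximate Parisi functional `𝒫_r^ε(Λ, Q̲)` obtained from the
perturbed Crisanti–Sommers functional at its critical point. -/
def PfunEpsApprox (β : ℕ → Fin n → ℝ) (h : Fin n → ℝ) (Q : Mat n) (r : ℕ) (ε : ℝ)
    (Λ : Mat n) (x : ℕ → ℝ) (Qs : ℕ → Mat n) : ℝ :=
  (1 / 2) * (ip Λ Q - (n : ℝ) - Real.log Λ.det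
    + ∑ k ∈ Finset.Ico 1 r,
        (1 / x k) * Real.log ((LE β x Qs Λ r ε (k + 1)).det / (LE β x Qs Λ r ε k).det)
    + ip (LE β x Qs Λ r ε 1)⁻¹ (vecMulVec h h + xi'M β (Qs 1))
    - ∑ k ∈ Finset.Ico 1 r, x k * matSum (thetaM β (Qs (k + 1)) - thetaM β (Qs k))
    - ε * ∑ k ∈ Finset.Ico 1 (r - 1),
        ip (Ebar x (EC x Qs r) r (k + 1) - Ebar x (EC x Qs r) r k) (Qs k)
    + ∑ k ∈ Finset.Ico 1 (r - 1),
        (ε / x k) * ip (LE β x Qs Λ r ε k)⁻¹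
          (Ebar x (EC x Qs r) r k - Ebar x (EC x Qs r) r (k + 1))
    + ε * ip (LE β x Qs Λ r ε (r - 1))⁻¹ (Ebar x (EC x Qs r) r (r - 1))
    + ε * ip (Qs (r - 1)) (Ebar x (EC x Qs r) r (r - 1))
    - ε * barrier Qs r)

/-! Continuous-time objects -/

/-- The entrywise derivative `Φ'(t)`. -/
def phiD (Φ : ℝ → Mat n) (t : ℝ) : Mat n := Matrix.of fun i j => deriv (fun s => Φ s i j) t

/-- `Φ̂(t) = ∫_t^n x(s) Φ'(s) ds` (entrywise). -/
def phiHat (x : ℝ → ℝ) (Φ : ℝ → Mat n) (t : ℝ) : Mat n :=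
  Matrix.of fun i j => ∫ s in t..(n : ℝ), x s * phiD Φ s i j

/-- `t_x = inf { t ∈ [0, n] : x(t) ≥ 1 }`. -/
def txx (nR : ℝ) (x : ℝ → ℝ) : ℝ := sInf {t : ℝ | t ∈ Set.Icc 0 nR ∧ 1 ≤ x t}

/-- The Crisanti–Sommers functional `𝒞(x, Φ)` in integral form. -/
def Ccont (β : ℕ → Fin n → ℝ) (h : Fin n → ℝ) (Q : Mat n)
    (x : ℝ → ℝ) (Φ : ℝ → Mat n) : ℝ :=
  (1 / 2) * ((∫ t in (0:ℝ)..(n : ℝ), x t * ip (xi'M β (Φ t) + vecMulVec h h) (phiD Φ t))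
    + Real.log (Q - Φ (txx (n : ℝ) x)).det
    + ∫ t in (0:ℝ)..(txx (n : ℝ) x), ip (phiHat x Φ t)⁻¹ (phiD Φ t))

/-- An admissible monotone matrix path `Φ` parametrized by its trace. -/
structure AdmPath (Q : Mat n) (Φ : ℝ → Mat n) : Prop where
  zero : Φ 0 = 0
  top : Φ (n : ℝ) = Q
  tr : ∀ t ∈ Set.Icc (0:ℝ) (n : ℝ), (Φ t).trace = t
  psd : ∀ t ∈ Set.Icc (0:ℝ) (n : ℝ), (Φ t).PosSemidef
  mono : ∀ s t : ℝ, s ∈ Set.Icc (0:ℝ) (n : ℝ) → t ∈ Set.Icc (0:ℝ) (n : ℝ) → s ≤ t →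
    (Φ t - Φ s).PosSemidef
  lip : ∀ i j, LipschitzOnWith 1 (fun t => Φ t i j) (Set.Icc (0:ℝ) (n : ℝ))

/-- An admissible c.d.f.: right-continuous, nondecreasing, from `[0,n]` to `[0,1]`,
with `x(0) = 0` and `x(n) = 1`. -/
structure AdmCDF (n : ℕ) (x : ℝ → ℝ) : Prop where
  zero : x 0 = 0
  top : x (n : ℝ) = 1
  mono : MonotoneOn x (Set.Icc (0:ℝ) (n : ℝ))
  mem : ∀ t ∈ Set.Icc (0:ℝ) (n : ℝ), x t ∈ Set.Icc (0:ℝ) 1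
  rightCont : ∀ t ∈ Set.Ico (0:ℝ) (n : ℝ), ContinuousWithinAt x (Set.Ici t) t

/-- An admissible pair `(x, Φ)` with `det(Q - Φ(t_x)) > 0`. -/
def AdmPair (Q : Mat n) (x : ℝ → ℝ) (Φ : ℝ → Mat n) : Prop :=
  AdmCDF n x ∧ AdmPath Q Φ ∧ 0 < (Q - Φ (txx (n : ℝ) x)).det

/-- Membership in the set `A_{T,L}`. -/
def ATL (Q : Mat n) (T L : ℝ) (x : ℝ → ℝ) (Φ : ℝ → Mat n) : Prop :=
  AdmPair Q x Φ ∧ (∀ t : ℝ, T ≤ t → t ≤ (n : ℝ) → x t = 1) ∧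
    ∀ i j, |(Q - Φ (txx (n : ℝ) x))⁻¹ i j| ≤ L

end SphericalSG

namespace Matrix

open scoped ComplexOrder

variable {ι 𝕜 : Type*} [RCLike 𝕜] {A B : Matrix ι ι 𝕜}

lemma map_pow_succ_succ (A : Matrix ι ι 𝕜) (k : ℕ) :
    A.map (· ^ (k + 2)) = A ⊙ A.map (· ^ (k + 1)) := by
  ext i j
  simp [hadamard_apply, pow_succ' _ (k + 1)]

lemma PosSemidef.map_pow_succ (hA : A.PosSemidef) (k : ℕ) :
    (A.map (· ^ (k + 1))).PosSemidef := by
  induction k with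
  | zero => simpa using hA
  | succ k ih => simpa only [map_pow_succ_succ] using hA.hadamard ih

lemma PosDef.map_pow_succ_sub [Fintype ι] (hB : B.PosSemidef) (hAB : (A - B).PosDef) (k : ℕ) :
    (A.map (· ^ (k + 1)) - B.map (· ^ (k + 1))).PosDef := by
  have hA : A.PosDef := by simpa using PosDef.posSemidef_add hB hAB
  induction k with
  | zero => simpa using hAB
  | succ k ih =>
    have hsplit : A.map (· ^ (k + 2)) - B.map (· ^ (k + 2)) =
        A ⊙ (A.map (· ^ (k + 1)) - B.map (· ^ (k + 1))) + (A - B) ⊙ B.map (· ^ (k + 1)) := by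
      ext i j
      simp only [sub_apply, add_apply, hadamard_apply, map_apply]
      ring
    rw [hsplit]
    exact (hA.hadamard ih).add_posSemidef (hAB.posSemidef.hadamard (hB.map_pow_succ k))

lemma PosDef.of_hasSum {ι α : Type*} [Fintype ι] {T : α → Matrix ι ι ℝ} {S : Matrix ι ι ℝ}
    (hS : HasSum T S) (hT : ∀ p, (T p).PosSemidef)
    (hpos : ∀ v : ι → ℝ, v ≠ 0 → ∃ p, 0 < star v ⬝ᵥ (T p *ᵥ v)) : S.PosDef := by
  have hherm : S.IsHermitian :=
    hS.matrix_conjTranspose.unique (by simpa only [fun p => (hT p).isHermitian.eq] using hS)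
  refine PosDef.of_dotProduct_mulVec_pos hherm fun v hv => ?_
  let q : Matrix ι ι ℝ →+ ℝ :=
    { toFun := fun M => star v ⬝ᵥ (M *ᵥ v)
      map_zero' := by simp
      map_add' := fun M N => by simp [add_mulVec] }
  have hq : HasSum (fun p => star v ⬝ᵥ (T p *ᵥ v)) (star v ⬝ᵥ (S *ᵥ v)) :=
    hS.map q (continuous_const.dotProduct (continuous_id.matrix_mulVec continuous_const))
  obtain ⟨p, hp⟩ := hpos v hv
  rw [← hq.tsum_eq]
  exact hq.summable.tsum_pos (fun p => (hT p).dotProduct_mulVec_nonneg v) p hp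

lemma dotProduct_conjTranspose_mul_mul_mulVec {ι κ R : Type*} [Fintype ι] [Fintype κ]
    [CommRing R] [StarRing R] (M : Matrix κ κ R) (B : Matrix κ ι R) (v : ι → R) :
    star v ⬝ᵥ ((Bᴴ * M * B) *ᵥ v) = star (B *ᵥ v) ⬝ᵥ (M *ᵥ (B *ᵥ v)) := by
  simp only [star_mulVec, dotProduct_mulVec, vecMul_vecMul, Matrix.mul_assoc]

end Matrix

namespace SphericalSG

variable {n : ℕ} {β : ℕ → Fin n → ℝ} {A B : Mat n}

/-- The summand `(p+2) (β_{p+2} β_{p+2}ᵀ) ⊙ A^{∘(p+1)}` of `xi'M`, written as a congruence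
by `diagonal β_{p+2}`. -/
def xi'Term (β : ℕ → Fin n → ℝ) (A : Mat n) (p : ℕ) : Mat n :=
  ((p : ℝ) + 2) • ((diagonal (β (p + 2)))ᴴ * A.map (· ^ (p + 1)) * diagonal (β (p + 2)))

lemma summable_xi'M_entry (hβsum : ∀ j, Summable fun p : ℕ => (2:ℝ) ^ p * β p j ^ 2)
    {x : ℝ} (hx : |x| ≤ 1) (i j : Fin n) :
    Summable fun p : ℕ => ((p : ℝ) + 2) * (β (p + 2) i * β (p + 2) j * x ^ (p + 1)) := by
  have hshift : ∀ j, Summable fun p : ℕ => (2:ℝ) ^ (p + 2) * β (p + 2) j ^ 2 :=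
    fun j => (summable_nat_add_iff 2).mpr (hβsum j)
  refine ((hshift i).add (hshift j)).of_norm_bounded fun p => ?_
  set a := β (p + 2) i
  set b := β (p + 2) j
  have hab : |a * b| ≤ a ^ 2 + b ^ 2 := by
    rw [abs_mul]
    nlinarith [sq_abs a, sq_abs b, two_mul_le_add_sq |a| |b|, abs_nonneg a, abs_nonneg b]
  have hxp : |x ^ (p + 1)| ≤ 1 := by rw [abs_pow]; exact pow_le_one₀ (abs_nonneg x) hx
  calc ‖((p : ℝ) + 2) * (a * b * x ^ (p + 1))‖ = ((p : ℝ) + 2) * (|a * b| * |x ^ (p + 1)|) := by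
        rw [Real.norm_eq_abs, abs_mul, abs_mul, abs_of_nonneg (by positivity)]
    _ ≤ 2 ^ (p + 2) * (a ^ 2 + b ^ 2) := by
        gcongr
        · exact_mod_cast (Nat.lt_two_pow_self (n := p + 2)).le
        · exact mul_le_of_le_one_right (abs_nonneg _) hxp |>.trans hab
    _ = 2 ^ (p + 2) * a ^ 2 + 2 ^ (p + 2) * b ^ 2 := mul_add _ _ _

lemma hasSum_xi'Term (hβsum : ∀ j, Summable fun p : ℕ => (2:ℝ) ^ p * β p j ^ 2)
    (hA : ∀ i j, A i j ∈ Set.Icc (-1:ℝ) 1) : HasSum (xi'Term β A) (xi'M β A) := by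
  refine Pi.hasSum.mpr fun i => Pi.hasSum.mpr fun j => ?_
  convert (summable_xi'M_entry hβsum (abs_le.mpr (hA i j)) i j).hasSum using 1
  · ext p
    simp only [xi'Term, conjTranspose_eq_transpose_of_trivial, diagonal_transpose, Matrix.smul_apply,
      mul_diagonal, diagonal_mul, map_apply, smul_eq_mul]
    ring
  · rfl

lemma xi'Term_sub (β : ℕ → Fin n → ℝ) (A B : Mat n) (p : ℕ) :
    xi'Term β A p - xi'Term β B p = ((p : ℝ) + 2) •
      ((diagonal (β (p + 2)))ᴴ * (A.map (· ^ (p + 1)) - B.map (· ^ (p + 1))) *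
        diagonal (β (p + 2))) := by
  simp only [xi'Term, mul_sub, sub_mul, smul_sub]

lemma posSemidef_xi'Term_sub (hB : B.PosSemidef) (hAB : (A - B).PosDef) (p : ℕ) :
    (xi'Term β A p - xi'Term β B p).PosSemidef := by
  rw [xi'Term_sub]
  exact ((hAB.map_pow_succ_sub hB p).posSemidef.conjTranspose_mul_mul_same _).smul
    (by positivity)

lemma dotProduct_xi'Term_sub_mulVec_pos (hB : B.PosSemidef) (hAB : (A - B).PosDef)
    {v : Fin n → ℝ} {i : Fin n} {p : ℕ} (hv : v i ≠ 0) (hβ : β (p + 2) i ≠ 0) :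
    0 < star v ⬝ᵥ ((xi'Term β A p - xi'Term β B p) *ᵥ v) := by
  have hβv : diagonal (β (p + 2)) *ᵥ v ≠ 0 := fun h => by
    simpa [mulVec_diagonal, hv, hβ] using congrFun h i
  rw [xi'Term_sub, smul_mulVec, dotProduct_smul, smul_eq_mul,
    dotProduct_conjTranspose_mul_mul_mulVec]
  exact mul_pos (by positivity) ((hAB.map_pow_succ_sub hB p).dotProduct_mulVec_pos hβv)

lemma posDef_xi'M_sub (hβsum : ∀ j, Summable fun p : ℕ => (2:ℝ) ^ p * β p j ^ 2)
    (hβnz : ∀ j, ∃ p, 2 ≤ p ∧ β p j ≠ 0)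
    (hAmem : ∀ i j, A i j ∈ Set.Icc (-1:ℝ) 1) (hBmem : ∀ i j, B i j ∈ Set.Icc (-1:ℝ) 1)
    (hB : B.PosSemidef) (hAB : (A - B).PosDef) : (xi'M β A - xi'M β B).PosDef := by
  refine PosDef.of_hasSum ((hasSum_xi'Term hβsum hAmem).sub (hasSum_xi'Term hβsum hBmem))
    (posSemidef_xi'Term_sub hB hAB) fun v hv => ?_
  obtain ⟨i, hi⟩ := Function.ne_iff.mp hv
  obtain ⟨p, hp, hβ⟩ := hβnz i
  obtain ⟨q, rfl⟩ := Nat.exists_eq_add_of_le' hp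
  exact ⟨q, dotProduct_xi'Term_sub_mulVec_pos hB hAB hi hβ⟩

theorem xi'_gap_posdef_general (n : ℕ) (β : ℕ → Fin n → ℝ)
    (hβsum : ∀ j, Summable fun p : ℕ => (2:ℝ) ^ p * β p j ^ 2)
    (hβnz : ∀ j, ∃ p, 2 ≤ p ∧ β p j ≠ 0)
    (Qprev Qcur : Mat n) (hQprev : Qprev.PosSemidef)
    (hQprevMem : ∀ i j, Qprev i j ∈ Set.Icc (-1:ℝ) 1)
    (hQcurMem : ∀ i j, Qcur i j ∈ Set.Icc (-1:ℝ) 1)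
    (hle : (Qcur - Qprev).PosSemidef)
    (hdetGap : 0 < (Qcur - Qprev).det) :
    0 < (xi'M β Qcur - xi'M β Qprev).det :=
  (posDef_xi'M_sub hβsum hβnz hQcurMem hQprevMem hQprev
    (hle.posDef_iff_det_ne_zero.mpr hdetGap.ne')).det_pos

/-- Positive definiteness of increments of `ξ'`: if `Q_{ℓ-1} ⪯ Q_ℓ`,
`det Q_ℓ > 0` and `det(Q_ℓ - Q_{ℓ-1}) > 0`, then
`det(ξ'(Q_ℓ) - ξ'(Q_{ℓ-1})) > 0`. -/
theorem xi'_gap_posdef (n : ℕ) (hn : 1 ≤ n) (β : ℕ → Fin n → ℝ)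
    (hβnn : ∀ p j, 0 ≤ β p j)
    (hβodd : ∀ p : ℕ, Odd p → ∀ j, β p j = 0)
    (hβsum : ∀ j, Summable fun p : ℕ => (2:ℝ) ^ p * β p j ^ 2)
    (hβnz : ∀ j, ∃ p, 2 ≤ p ∧ β p j ≠ 0)
    (Qprev Qcur : Mat n) (hQprev : Qprev.PosSemidef) (hQcur : Qcur.PosSemidef)
    (hQprevMem : ∀ i j, Qprev i j ∈ Set.Icc (-1:ℝ) 1)
    (hQcurMem : ∀ i j, Qcur i j ∈ Set.Icc (-1:ℝ) 1)
    (hle : (Qcur - Qprev).PosSemidef)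
    (hdet : 0 < Qcur.det) (hdetGap : 0 < (Qcur - Qprev).det) :
    0 < (xi'M β Qcur - xi'M β Qprev).det :=
  xi'_gap_posdef_general n β hβsum hβnz Qprev Qcur hQprev hQprevMem hQcurMem hle hdetGap

end SphericalSG

end
end

section
/- Let β¹ = (β¹_p)_{p≥2} and β² = (β²_p)_{p≥2} be two families of inverse-temperature vectors in ℝⁿ with nonnegative entries, vanishing for odd p, and satisfying Σ_{p≥2} 2^p β_p(j)² < ∞ for each j ≤ n. Suppose Σ_{p≥2} Σ_{i,j≤n} |β¹_p(i) β¹_p(j) − β²_p(i) β²_p(j)| ≤ δ. Then for every r ≥ 1 and every discrete path (x̲, Q̲) of order r with det(Q − Q_{r−1}) > 0, the discrete Crisanti–Sommers functionals computed with β¹ and β² satisfy |C_{r,β¹}(x̲, Q̲) − C_{r,β²}(x̲, Q̲)| ≤ 2δ. -/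
open Matrix BigOperators Filter MeasureTheory

noncomputable section

/-! Only the last term of `Cfun` depends on the temperatures. Put
`F m = Sum (ξ_{β¹}(Q_m) - ξ_{β²}(Q_m))`. Since `0 ⪯ Q_m ⪯ Q` and `Q` has unit diagonal, the
entries of `Q_m` lie in `[-1, 1]`, so `|F m| ≤ δ`. Summation by parts against the nondecreasing
weights `0 ≤ x_k ≤ 1` then bounds `Σ_k x_k (F (k+1) - F k)` by `2δ`. -/

theorem Matrix.PosSemidef.abs_apply_le {ι : Type*} [Fintype ι] [DecidableEq ι]
    {A : Matrix ι ι ℝ} (hA : A.PosSemidef) (i j : ι) : |A i j| ≤ (A i i + A j j) / 2 := by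
  have hsymm : A j i = A i j := by simpa using hA.isHermitian.apply i j
  have hquad (s : ℝ) : 0 ≤ A i i + 2 * s * A i j + s ^ 2 * A j j := by
    have := hA.dotProduct_mulVec_nonneg (Pi.single i 1 + s • Pi.single j 1)
    simp only [star_trivial, mulVec_add, mulVec_smul, mulVec_single_one, add_dotProduct,
      dotProduct_add, smul_dotProduct, dotProduct_smul, single_one_dotProduct, smul_eq_mul,
      col_apply, hsymm] at this
    linarith
  rw [abs_le]
  constructor <;> nlinarith [hquad 1, hquad (-1)]

theorem Matrix.PosSemidef.abs_apply_le_one {ι : Type*} [Fintype ι] [DecidableEq ι]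
    {A B : Matrix ι ι ℝ} (hA : A.PosSemidef) (hBA : (B - A).PosSemidef) (hB : ∀ i, B i i ≤ 1)
    (i j : ι) : |A i j| ≤ 1 := by
  have hdiag (k : ι) : A k k ≤ 1 := by
    have := hBA.diag_nonneg (i := k)
    rw [sub_apply] at this
    linarith [hB k]
  linarith [hA.abs_apply_le i j, hdiag i, hdiag j]

theorem summable_abs_mul_of_summable_sq {a b : ℕ → ℝ} (ha : Summable fun p => a p ^ 2)
    (hb : Summable fun p => b p ^ 2) : Summable fun p => |a p * b p| :=
  .of_nonneg_of_le (fun _ => abs_nonneg _)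
    (fun p => by rw [abs_mul]; nlinarith [sq_abs (a p), sq_abs (b p), sq_nonneg (|a p| - |b p|)])
    (ha.add hb)

theorem summable_sq_of_summable_two_pow_mul_sq {a : ℕ → ℝ}
    (ha : Summable fun p => (2 : ℝ) ^ p * a p ^ 2) : Summable fun p => a p ^ 2 :=
  .of_nonneg_of_le (fun _ => sq_nonneg _)
    (fun _ => le_mul_of_one_le_left (sq_nonneg _) (one_le_pow₀ one_le_two)) ha

theorem Finset.sum_Ico_one_eq_sum_range {M : Type*} [AddCommMonoid M] {f : ℕ → M}
    (hf : f 0 = 0) : ∀ r, ∑ k ∈ Finset.Ico 1 r, f k = ∑ k ∈ Finset.range r, f k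
  | 0 => rfl
  | r + 1 => by rw [Finset.sum_range_eq_add_Ico _ r.succ_pos, hf, zero_add]

theorem abs_sum_range_mul_sub_le {x F : ℕ → ℝ} {r : ℕ} {δ : ℝ} (hx0 : 0 ≤ x 0)
    (hx : ∀ k, k + 1 ≤ r - 1 → x k ≤ x (k + 1)) (hx1 : x (r - 1) ≤ 1) (hF0 : F 0 = 0)
    (hF : ∀ m ≤ r, |F m| ≤ δ) :
    |∑ k ∈ Finset.range r, x k * (F (k + 1) - F k)| ≤ 2 * δ := by
  have hδ : 0 ≤ δ := (abs_nonneg _).trans (hF 0 (Nat.zero_le r))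
  have hparts := Finset.sum_range_by_parts x (fun k => F (k + 1) - F k) r
  simp only [Finset.sum_range_sub, hF0, sub_zero, smul_eq_mul] at hparts
  have hincr : |∑ k ∈ Finset.range (r - 1), (x (k + 1) - x k) * F (k + 1)|
      ≤ (x (r - 1) - x 0) * δ := by
    calc _ ≤ ∑ k ∈ Finset.range (r - 1), |(x (k + 1) - x k) * F (k + 1)| :=
          Finset.abs_sum_le_sum_abs _ _
      _ ≤ ∑ k ∈ Finset.range (r - 1), (x (k + 1) - x k) * δ := by
          refine Finset.sum_le_sum fun k hk => ?_
          have hk : k + 1 ≤ r - 1 := Finset.mem_range.1 hk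
          rw [abs_mul, abs_of_nonneg (sub_nonneg.2 (hx k hk))]
          exact mul_le_mul_of_nonneg_left (hF _ (by omega)) (sub_nonneg.2 (hx k hk))
      _ = (x (r - 1) - x 0) * δ := by rw [← Finset.sum_mul, Finset.sum_range_sub]
  have hxtop : 0 ≤ x (r - 1) := by
    have : 0 ≤ ∑ k ∈ Finset.range (r - 1), (x (k + 1) - x k) :=
      Finset.sum_nonneg fun k hk => sub_nonneg.2 (hx k (Finset.mem_range.1 hk))
    rw [Finset.sum_range_sub] at this
    linarith
  rw [hparts]
  calc _ ≤ |x (r - 1) * F r| + |∑ k ∈ Finset.range (r - 1), (x (k + 1) - x k) * F (k + 1)| :=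
        abs_sub _ _
    _ ≤ x (r - 1) * δ + (x (r - 1) - x 0) * δ := by
        rw [abs_mul, abs_of_nonneg hxtop]
        gcongr
        exact hF r le_rfl
    _ ≤ 2 * δ := by nlinarith

namespace SphericalSG

variable {n : ℕ}

theorem matSum_sub (A B : Mat n) : matSum (A - B) = matSum A - matSum B := by
  simp only [matSum, Matrix.sub_apply, Finset.sum_sub_distrib]

theorem xiM_zero (β : ℕ → Fin n → ℝ) : xiM β 0 = 0 := by
  ext i j
  simp [xiM]

theorem abs_xiM_sub_xiM_apply_le {β1 β2 : ℕ → Fin n → ℝ} {A : Mat n} {i j : Fin n}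
    (hβ1 : Summable fun p => |β1 (p + 2) i * β1 (p + 2) j|)
    (hβ2 : Summable fun p => |β2 (p + 2) i * β2 (p + 2) j|) (hA : |A i j| ≤ 1) :
    |xiM β1 A i j - xiM β2 A i j| ≤
      ∑' p, |β1 (p + 2) i * β1 (p + 2) j - β2 (p + 2) i * β2 (p + 2) j| := by
  have hpow (p : ℕ) : |A i j| ^ (p + 2) ≤ 1 := pow_le_one₀ (abs_nonneg _) hA
  have hβ : Summable fun p => |β1 (p + 2) i * β1 (p + 2) j - β2 (p + 2) i * β2 (p + 2) j| :=
    (hβ1.of_abs.sub hβ2.of_abs).abs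
  have hterm {β : ℕ → Fin n → ℝ} (hβ : Summable fun p => |β (p + 2) i * β (p + 2) j|) :
      Summable fun p => β (p + 2) i * β (p + 2) j * A i j ^ (p + 2) :=
    hβ.of_norm_bounded fun p => by
      rw [Real.norm_eq_abs, abs_mul, abs_pow]
      exact mul_le_of_le_one_right (abs_nonneg _) (hpow p)
  simp only [xiM, of_apply]
  rw [← (hterm hβ1).tsum_sub (hterm hβ2), ← Real.norm_eq_abs]
  refine tsum_of_norm_bounded hβ.hasSum fun p => ?_
  rw [Real.norm_eq_abs, ← sub_mul, abs_mul, abs_pow]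
  exact mul_le_of_le_one_right (abs_nonneg _) (hpow p)

theorem abs_matSum_xiM_sub_le {β1 β2 : ℕ → Fin n → ℝ} {A : Mat n}
    (hβ1 : ∀ i j, Summable fun p => |β1 (p + 2) i * β1 (p + 2) j|)
    (hβ2 : ∀ i j, Summable fun p => |β2 (p + 2) i * β2 (p + 2) j|) (hA : ∀ i j, |A i j| ≤ 1) :
    |matSum (xiM β1 A - xiM β2 A)| ≤
      ∑' p, ∑ i, ∑ j, |β1 (p + 2) i * β1 (p + 2) j - β2 (p + 2) i * β2 (p + 2) j| := by
  have hβ (i j : Fin n) :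
      Summable fun p => |β1 (p + 2) i * β1 (p + 2) j - β2 (p + 2) i * β2 (p + 2) j| :=
    ((hβ1 i j).of_abs.sub (hβ2 i j).of_abs).abs
  rw [Summable.tsum_finsetSum fun i _ => summable_sum fun j _ => hβ i j]
  simp only [Summable.tsum_finsetSum fun j _ => hβ _ j]
  refine (Finset.abs_sum_le_sum_abs _ _).trans (Finset.sum_le_sum fun i _ => ?_)
  refine (Finset.abs_sum_le_sum_abs _ _).trans (Finset.sum_le_sum fun j _ => ?_)
  exact abs_xiM_sub_xiM_apply_le (hβ1 i j) (hβ2 i j) (hA i j)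

theorem Cfun_sub_Cfun (β1 β2 : ℕ → Fin n → ℝ) (h : Fin n → ℝ) (Q : Mat n) (r : ℕ)
    (x : ℕ → ℝ) (Qs : ℕ → Mat n) :
    Cfun β1 h Q r x Qs - Cfun β2 h Q r x Qs = (1 / 2) * ∑ k ∈ Finset.Ico 1 r,
      x k * (matSum (xiM β1 (Qs (k + 1)) - xiM β2 (Qs (k + 1)))
        - matSum (xiM β1 (Qs k) - xiM β2 (Qs k))) := by
  simp only [Cfun, matSum_sub, mul_sub, Finset.sum_sub_distrib]
  ring

namespace IsPath

variable {Q : Mat n} {r : ℕ} {x : ℕ → ℝ} {Qs : ℕ → Mat n}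

theorem posSemidef_sub (hpath : IsPath Q r x Qs) {l m : ℕ} (hlm : l ≤ m) (hm : m ≤ r) :
    (Qs m - Qs l).PosSemidef := by
  induction m, hlm using Nat.le_induction with
  | base => simpa using PosSemidef.zero
  | succ m hlm ih =>
    simpa using (hpath.inc m hm).add (ih (by omega))

theorem abs_apply_le_one (hpath : IsPath Q r x Qs) (hQ : ∀ i, Q i i ≤ 1) {m : ℕ} (hm : m ≤ r)
    (i j : Fin n) : |Qs m i j| ≤ 1 := by
  have hQm := hpath.posSemidef_sub (Nat.zero_le m) hm
  have hQQm := hpath.posSemidef_sub hm le_rfl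
  rw [hpath.Q0, sub_zero] at hQm
  rw [hpath.Qr] at hQQm
  exact hQm.abs_apply_le_one hQQm hQ i j

end IsPath

theorem Cfun_uniformContinuous_temperature_general (n : ℕ) (h : Fin n → ℝ)
    (β1 β2 : ℕ → Fin n → ℝ)
    (hβ1sum : ∀ j, Summable fun p : ℕ => (2:ℝ) ^ p * β1 p j ^ 2)
    (hβ2sum : ∀ j, Summable fun p : ℕ => (2:ℝ) ^ p * β2 p j ^ 2)
    (Q : Mat n) (hQdiag : ∀ i, Q i i = 1)
    (δ : ℝ)
    (hδ : (∑' p : ℕ, ∑ i, ∑ j,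
      |β1 (p + 2) i * β1 (p + 2) j - β2 (p + 2) i * β2 (p + 2) j|) ≤ δ)
    (r : ℕ) (x : ℕ → ℝ) (Qs : ℕ → Mat n)
    (hpath : IsPath Q r x Qs) :
    |Cfun β1 h Q r x Qs - Cfun β2 h Q r x Qs| ≤ 2 * δ := by
  have hsummable {β : ℕ → Fin n → ℝ} (hβ : ∀ j, Summable fun p => (2:ℝ) ^ p * β p j ^ 2)
      (i j : Fin n) : Summable fun p => |β (p + 2) i * β (p + 2) j| :=
    (summable_nat_add_iff 2).2 <| summable_abs_mul_of_summable_sq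
      (summable_sq_of_summable_two_pow_mul_sq (hβ i))
      (summable_sq_of_summable_two_pow_mul_sq (hβ j))
  set F : ℕ → ℝ := fun m => matSum (xiM β1 (Qs m) - xiM β2 (Qs m))
  have hF0 : F 0 = 0 := by simp [F, hpath.Q0, xiM_zero, matSum]
  have hF (m : ℕ) (hm : m ≤ r) : |F m| ≤ δ :=
    (abs_matSum_xiM_sub_le (hsummable hβ1sum) (hsummable hβ2sum)
      (hpath.abs_apply_le_one (fun i => (hQdiag i).le) hm)).trans hδ
  have hδ0 : 0 ≤ δ := (abs_nonneg _).trans (hF 0 (Nat.zero_le r))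
  have hbound := abs_sum_range_mul_sub_le hpath.x0.ge hpath.xmono hpath.xtop hF0 hF
  rw [Cfun_sub_Cfun, Finset.sum_Ico_one_eq_sum_range (by rw [hpath.x0, zero_mul]), abs_mul,
    abs_of_pos one_half_pos]
  linarith

/-- Uniform continuity of the discrete Crisanti–Sommers functional with respect
to the inverse temperature parameters. -/
theorem Cfun_uniformContinuous_temperature (n : ℕ) (hn : 1 ≤ n) (h : Fin n → ℝ)
    (β1 β2 : ℕ → Fin n → ℝ)
    (hβ1nn : ∀ p j, 0 ≤ β1 p j) (hβ2nn : ∀ p j, 0 ≤ β2 p j)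
    (hβ1odd : ∀ p : ℕ, Odd p → ∀ j, β1 p j = 0)
    (hβ2odd : ∀ p : ℕ, Odd p → ∀ j, β2 p j = 0)
    (hβ1sum : ∀ j, Summable fun p : ℕ => (2:ℝ) ^ p * β1 p j ^ 2)
    (hβ2sum : ∀ j, Summable fun p : ℕ => (2:ℝ) ^ p * β2 p j ^ 2)
    (Q : Mat n) (hQ : Q.PosDef) (hQdiag : ∀ i, Q i i = 1)
    (δ : ℝ)
    (hδ : (∑' p : ℕ, ∑ i, ∑ j,
      |β1 (p + 2) i * β1 (p + 2) j - β2 (p + 2) i * β2 (p + 2) j|) ≤ δ)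
    (r : ℕ) (hr : 1 ≤ r) (x : ℕ → ℝ) (Qs : ℕ → Mat n)
    (hpath : IsPath Q r x Qs) (hdet : 0 < (Q - Qs (r - 1)).det) :
    |Cfun β1 h Q r x Qs - Cfun β2 h Q r x Qs| ≤ 2 * δ :=
  Cfun_uniformContinuous_temperature_general n h β1 β2 hβ1sum hβ2sum Q hQdiag δ hδ r x Qs hpath

end SphericalSG

end
end
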